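/- For every positive integer ℓ there exist an integer m ≥ 3, a positive integer n, and positive integers a₁,…,aₙ such that the sum of generalized m-gonal numbers f(x₁,…,xₙ) = ∑_{j=1}^n a_j P_m(x_j) represents every nonnegative integer other than ℓ and does not represent ℓ. -/
import Mathlib


/-- The generalized `m`-gonal number `P_m(x) = ((m-2)x² - (m-4)x)/2`. -/
def polygonal (m x : ℤ) : ℤ := ((m - 2) * x ^ 2 - (m - 4) * x) / 2

lemma two_polygonal (m t : ℤ) : 2 * polygonal m t = (m-2)*t^2 - (m-4)*t := by
  have he : Even ((t-1)*t) := by simpa using Int.even_mul_succ_self (t-1)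
  obtain ⟨u, hu⟩ := he
  have hdvd : (2:ℤ) ∣ ((m-2)*t^2 - (m-4)*t) := ⟨(m-2)*u + t, by linear_combination (m-2)*hu⟩
  unfold polygonal
  rw [Int.mul_ediv_cancel' hdvd]

lemma polygonal_zero (m : ℤ) : polygonal m 0 = 0 := by
  unfold polygonal; norm_num

lemma polygonal_one (m : ℤ) : polygonal m 1 = 1 := by
  have h : (m-2)*1^2 - (m-4)*1 = 2 := by ring
  unfold polygonal; rw [h]; norm_num

lemma polygonal_pair (m t : ℤ) : polygonal m t + polygonal m (-t) = (m-2)*t^2 := by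
  have h1 := two_polygonal m t
  have h2 := two_polygonal m (-t)
  have h : 2*(polygonal m t + polygonal m (-t)) = 2*((m-2)*t^2) := by linear_combination h1 + h2
  exact mul_left_cancel₀ two_ne_zero h

lemma poly_cases (L : ℕ) (t : ℤ) :
    polygonal ((L:ℤ)+4) t = 0 ∨ polygonal ((L:ℤ)+4) t = 1 ∨ (L:ℤ)+1 ≤ polygonal ((L:ℤ)+4) t := by
  have h := two_polygonal ((L:ℤ)+4) t
  have hL : (0:ℤ) ≤ (L:ℤ) := Int.natCast_nonneg L
  obtain ht | ht | ht | ht : t ≤ -1 ∨ t = 0 ∨ t = 1 ∨ 2 ≤ t := by omega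
  · right; right
    have hA : (0:ℤ) ≤ (L:ℤ) * ((2-t)*(-(t+1))) :=
      mul_nonneg hL (mul_nonneg (by linarith) (by linarith))
    have ht2 : (1:ℤ) ≤ t^2 := by nlinarith [sq_nonneg (t+1)]
    linarith
  · left; subst ht; exact polygonal_zero _
  · right; left; subst ht; exact polygonal_one _
  · right; right
    have hA : (0:ℤ) ≤ (L:ℤ) * ((t-2)*(t+1)) :=
      mul_nonneg hL (mul_nonneg (by linarith) (by linarith))
    have ht2 : (4:ℤ) ≤ t^2 := by nlinarith
    linarith

lemma polygonal_nonneg (L : ℕ) (t : ℤ) : 0 ≤ polygonal ((L:ℤ)+4) t := by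
  rcases poly_cases L t with h | h | h <;> [omega; omega; skip]
  have : (0:ℤ) ≤ L := Int.natCast_nonneg L
  omega


/-- `Represents m a k` means the sum `∑ j, a j * P_m(x j)` represents the integer `k`. -/
def Represents {n : ℕ} (m : ℤ) (a : Fin n → ℤ) (k : ℤ) : Prop :=
  ∃ x : Fin n → ℤ, ∑ j, a j * polygonal m (x j) = k

def acoef (L : ℕ) (j : ℕ) : ℤ :=
  if j < 8 then (L:ℤ)+1 else if j = 8 then 2*(L:ℤ)+1 else if j < L+8 then 1 else (L:ℤ)+1

lemma acoef_pos (L j : ℕ) : 0 < acoef L j := by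
  unfold acoef; split_ifs <;> omega

def xfun (L r s : ℕ) (δ a b c d : ℤ) (j : ℕ) : ℤ :=
  if j = 0 then a else if j = 1 then -a else if j = 2 then b else if j = 3 then -b
  else if j = 4 then c else if j = 5 then -c else if j = 6 then d else if j = 7 then -d
  else if j = 8 then δ else if j < r+9 then 1 else if j < L+8 then 0
  else if j < L+8+s then 1 else 0

lemma represents_aux (L : ℕ) (hL : 1 ≤ L) (r s δ q : ℕ) (hr : r + 1 ≤ L) (hs : s ≤ L + 1)
    (hδ : δ ≤ 1) :
    Represents ((L:ℤ)+4) (fun j : Fin (2*L+9) => acoef L (j:ℕ))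
      (((2*L+1)*δ + r + (L+1)*s + (L+1)*(L+2)*q : ℕ) : ℤ) := by
  obtain ⟨a, b, c, d, habcd⟩ := Nat.sum_four_squares q
  refine ⟨fun j => xfun L r s (δ:ℤ) a b c d (j:ℕ), ?_⟩
  have hXsum : ∑ j : Fin (2*L+9),
        acoef L (j:ℕ) * polygonal ((L:ℤ)+4) (xfun L r s (δ:ℤ) a b c d (j:ℕ))
      = ∑ j ∈ Finset.range (2*L+9),
        acoef L j * polygonal ((L:ℤ)+4) (xfun L r s (δ:ℤ) a b c d j) :=
    Fin.sum_univ_eq_sum_range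
      (fun j => acoef L j * polygonal ((L:ℤ)+4) (xfun L r s (δ:ℤ) a b c d j)) (2*L+9)
  rw [hXsum]
  set F : ℕ → ℤ := fun j => acoef L j * polygonal ((L:ℤ)+4) (xfun L r s (δ:ℤ) a b c d j)
    with hF
  have hxbig : ∀ j, 9 ≤ j → xfun L r s (δ:ℤ) a b c d j =
      (if j < r+9 then 1 else if j < L+8 then 0 else if j < L+8+s then 1 else 0) := by
    intro j hj
    unfold xfun
    rw [if_neg (by omega), if_neg (by omega), if_neg (by omega), if_neg (by omega),
        if_neg (by omega), if_neg (by omega), if_neg (by omega), if_neg (by omega),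
        if_neg (by omega)]
  have habig : ∀ j, 9 ≤ j → acoef L j = (if j < L+8 then 1 else (L:ℤ)+1) := by
    intro j hj
    unfold acoef
    rw [if_neg (by omega), if_neg (by omega)]
  have hPδ : polygonal ((L:ℤ)+4) (δ:ℤ) = (δ:ℤ) := by
    interval_cases δ <;> simp [polygonal_zero, polygonal_one]
  have h1 : ∑ j ∈ Finset.Ico 0 9, F j
      = ((L:ℤ)+1) * (polygonal ((L:ℤ)+4) a + polygonal ((L:ℤ)+4) (-a)
         + polygonal ((L:ℤ)+4) b + polygonal ((L:ℤ)+4) (-b)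
         + polygonal ((L:ℤ)+4) c + polygonal ((L:ℤ)+4) (-c)
         + polygonal ((L:ℤ)+4) d + polygonal ((L:ℤ)+4) (-d))
        + (2*(L:ℤ)+1) * (δ:ℤ) := by
    rw [← Finset.range_eq_Ico]
    norm_num [Finset.sum_range_succ, hF, xfun, acoef, hPδ]
    ring
  have h2 : ∑ j ∈ Finset.Ico 9 (r+9), F j = (r:ℤ) := by
    have hc : ∀ j ∈ Finset.Ico 9 (r+9), F j = 1 := by
      intro j hj
      simp only [Finset.mem_Ico] at hj
      simp only [hF]
      rw [habig j (by omega), hxbig j (by omega), if_pos (by omega), if_pos (by omega),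
          polygonal_one, mul_one]
    rw [Finset.sum_congr rfl hc, Finset.sum_const, Nat.card_Ico]
    have he : r+9-9 = r := by omega
    rw [he, nsmul_eq_mul, mul_one]
  have h3 : ∑ j ∈ Finset.Ico (r+9) (L+8), F j = 0 := by
    refine Finset.sum_eq_zero ?_
    intro j hj
    simp only [Finset.mem_Ico] at hj
    simp only [hF]
    rw [hxbig j (by omega), if_neg (by omega), if_pos (by omega), polygonal_zero, mul_zero]
  have h4 : ∑ j ∈ Finset.Ico (L+8) (L+8+s), F j = (s:ℤ) * ((L:ℤ)+1) := by
    have hc : ∀ j ∈ Finset.Ico (L+8) (L+8+s), F j = (L:ℤ)+1 := by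
      intro j hj
      simp only [Finset.mem_Ico] at hj
      simp only [hF]
      rw [habig j (by omega), hxbig j (by omega), if_neg (show ¬ j < L+8 by omega),
          if_neg (show ¬ j < r+9 by omega), if_neg (show ¬ j < L+8 by omega),
          if_pos (show j < L+8+s by omega), polygonal_one, mul_one]
    rw [Finset.sum_congr rfl hc, Finset.sum_const, Nat.card_Ico]
    have he : L+8+s-(L+8) = s := by omega
    rw [he, nsmul_eq_mul]
  have h5 : ∑ j ∈ Finset.Ico (L+8+s) (2*L+9), F j = 0 := by
    refine Finset.sum_eq_zero ?_
    intro j hj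
    simp only [Finset.mem_Ico] at hj
    simp only [hF]
    rw [hxbig j (by omega), if_neg (show ¬ j < r+9 by omega),
        if_neg (show ¬ j < L+8 by omega), if_neg (show ¬ j < L+8+s by omega),
        polygonal_zero, mul_zero]
  rw [Finset.range_eq_Ico,
      ← Finset.sum_Ico_consecutive F (show 0 ≤ 9 by omega) (show 9 ≤ 2*L+9 by omega),
      ← Finset.sum_Ico_consecutive F (show 9 ≤ r+9 by omega) (show r+9 ≤ 2*L+9 by omega),
      ← Finset.sum_Ico_consecutive F (show r+9 ≤ L+8 by omega) (show L+8 ≤ 2*L+9 by omega),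
      ← Finset.sum_Ico_consecutive F (show L+8 ≤ L+8+s by omega) (show L+8+s ≤ 2*L+9 by omega),
      h1, h2, h3, h4, h5]
  have hq : ((a:ℤ)^2 + (b:ℤ)^2 + (c:ℤ)^2 + (d:ℤ)^2) = (q:ℤ) := by exact_mod_cast habcd
  push_cast
  linear_combination ((L:ℤ)+1) * (polygonal_pair ((L:ℤ)+4) a + polygonal_pair ((L:ℤ)+4) b
    + polygonal_pair ((L:ℤ)+4) c + polygonal_pair ((L:ℤ)+4) d) + ((L:ℤ)+1)*((L:ℤ)+2)*hq


def gfun (L t : ℕ) : ℤ := if 9 ≤ t ∧ t < L+8 then 1 else 0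

lemma acoef_one_le (L j : ℕ) : 1 ≤ acoef L j := by
  unfold acoef; split_ifs <;> omega

/-- For every positive integer ℓ there is a sum of generalized m-gonal numbers representing
every nonnegative integer other than ℓ, and not representing ℓ. -/
theorem exists_sum_representing_all_but_ell (ℓ : ℤ) (hℓ : 0 < ℓ) :
    ∃ (m : ℤ) (_ : 3 ≤ m) (n : ℕ) (_ : 0 < n) (a : Fin n → ℤ) (_ : ∀ j, 0 < a j),
      (∀ k : ℤ, 0 ≤ k → k ≠ ℓ → Represents m a k) ∧ ¬ Represents m a ℓ := by
  obtain ⟨L, rfl⟩ := Int.eq_ofNat_of_zero_le hℓ.le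
  have hL : 1 ≤ L := by exact_mod_cast hℓ
  refine ⟨(L:ℤ)+4, by omega, 2*L+9, by omega, fun j : Fin (2*L+9) => acoef L (j:ℕ),
    fun j => acoef_pos L (j:ℕ), ?_, ?_⟩
  · -- coverage
    intro k hk0 hkne
    obtain ⟨K, rfl⟩ := Int.eq_ofNat_of_zero_le hk0
    have hKne : K ≠ L := fun h => hkne (by exact_mod_cast h)
    obtain ⟨δ, r, s, q, hδ, hr, hs, heq⟩ :
        ∃ δ r s q : ℕ, δ ≤ 1 ∧ r + 1 ≤ L ∧ s ≤ L + 1 ∧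
          K = (2*L+1)*δ + r + (L+1)*s + (L+1)*(L+2)*q := by
      obtain ⟨q0, w, hw1, hw2⟩ : ∃ q0 w, K = (L+1)*(L+2)*q0 + w ∧ w < (L+1)*(L+2) :=
        ⟨K / ((L+1)*(L+2)), K % ((L+1)*(L+2)), (Nat.div_add_mod K ((L+1)*(L+2))).symm,
          Nat.mod_lt K (by positivity)⟩
      obtain ⟨s0, r0, hv1, hv2⟩ : ∃ s0 r0, w = (L+1)*s0 + r0 ∧ r0 < L+1 :=
        ⟨w / (L+1), w % (L+1), (Nat.div_add_mod w (L+1)).symm, Nat.mod_lt w (by omega)⟩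
      have hs0 : s0 ≤ L + 1 := by
        have hlt : (L+1)*s0 < (L+1)*(L+2) := by
          calc (L+1)*s0 ≤ (L+1)*s0 + r0 := Nat.le_add_right _ _
            _ = w := hv1.symm
            _ < (L+1)*(L+2) := hw2
        have := Nat.lt_of_mul_lt_mul_left hlt
        omega
      rcases Nat.lt_or_ge r0 L with hc | hc
      · refine ⟨0, r0, s0, q0, by omega, by omega, hs0, ?_⟩
        have hz : (K:ℤ) = (2*(L:ℤ)+1)*0 + r0 + ((L:ℤ)+1)*s0 + ((L:ℤ)+1)*((L:ℤ)+2)*q0 := by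
          have hz1 : (K:ℤ) = ((L:ℤ)+1)*((L:ℤ)+2)*q0 + w := by exact_mod_cast hw1
          have hz2 : (w:ℤ) = ((L:ℤ)+1)*s0 + r0 := by exact_mod_cast hv1
          linear_combination hz1 + hz2
        exact_mod_cast hz
      · have hr0 : r0 = L := by omega
        rcases Nat.eq_zero_or_pos s0 with hs00 | hs0pos
        · rcases Nat.eq_zero_or_pos q0 with hq00 | hq0pos
          · exfalso
            apply hKne
            subst hs00 hq00 hr0
            simpa using by omega
          · obtain ⟨q1, rfl⟩ : ∃ q1, q0 = q1 + 1 := ⟨q0 - 1, by omega⟩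
            refine ⟨1, 0, L+1, q1, by omega, by omega, by omega, ?_⟩
            have hz : (K:ℤ) = (2*(L:ℤ)+1)*1 + 0 + ((L:ℤ)+1)*((L:ℤ)+1) + ((L:ℤ)+1)*((L:ℤ)+2)*q1 := by
              have hz1 : (K:ℤ) = ((L:ℤ)+1)*((L:ℤ)+2)*((q1:ℤ)+1) + w := by exact_mod_cast hw1
              have hz2 : (w:ℤ) = ((L:ℤ)+1)*s0 + r0 := by exact_mod_cast hv1
              have hz3 : (s0:ℤ) = 0 := by exact_mod_cast hs00
              have hz4 : (r0:ℤ) = L := by exact_mod_cast hr0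
              linear_combination hz1 + hz2 + ((L:ℤ)+1)*hz3 + hz4
            exact_mod_cast hz
        · obtain ⟨s1, rfl⟩ : ∃ s1, s0 = s1 + 1 := ⟨s0 - 1, by omega⟩
          refine ⟨1, 0, s1, q0, by omega, by omega, by omega, ?_⟩
          have hz : (K:ℤ) = (2*(L:ℤ)+1)*1 + 0 + ((L:ℤ)+1)*s1 + ((L:ℤ)+1)*((L:ℤ)+2)*q0 := by
            have hz1 : (K:ℤ) = ((L:ℤ)+1)*((L:ℤ)+2)*q0 + w := by exact_mod_cast hw1
            have hz2 : (w:ℤ) = ((L:ℤ)+1)*((s1:ℤ)+1) + r0 := by exact_mod_cast hv1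
            have hz4 : (r0:ℤ) = L := by exact_mod_cast hr0
            linear_combination hz1 + hz2 + hz4
          exact_mod_cast hz
    rw [show ((K:ℕ):ℤ) = (((2*L+1)*δ + r + (L+1)*s + (L+1)*(L+2)*q : ℕ):ℤ) by exact_mod_cast congrArg (Nat.cast : ℕ → ℤ) heq]
    exact represents_aux L hL r s δ q hr hs hδ
  · -- non-representation
    rintro ⟨x, hx⟩
    have hnonneg : ∀ j : Fin (2*L+9), 0 ≤ acoef L (j:ℕ) * polygonal ((L:ℤ)+4) (x j) :=
      fun j => mul_nonneg (acoef_pos L (j:ℕ)).le (polygonal_nonneg L (x j))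
    by_cases hbig : ∃ j : Fin (2*L+9), (L:ℤ)+1 ≤ acoef L (j:ℕ) * polygonal ((L:ℤ)+4) (x j)
    · obtain ⟨j0, hj0⟩ := hbig
      have hle := Finset.single_le_sum (fun j _ => hnonneg j) (Finset.mem_univ j0)
      rw [hx] at hle
      omega
    · push_neg at hbig
      have hterm : ∀ j : Fin (2*L+9),
          acoef L (j:ℕ) * polygonal ((L:ℤ)+4) (x j) ≤ gfun L (j:ℕ) := by
        intro j
        rcases poly_cases L (x j) with h | h | h
        · rw [h, mul_zero]
          unfold gfun; split_ifs <;> omega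
        · have hb := hbig j
          rw [h, mul_one] at hb ⊢
          revert hb
          unfold acoef gfun
          split_ifs <;> intro hb <;> omega
        · exfalso
          have hb := hbig j
          have h1 : 1 * polygonal ((L:ℤ)+4) (x j) ≤ acoef L (j:ℕ) * polygonal ((L:ℤ)+4) (x j) :=
            mul_le_mul_of_nonneg_right (acoef_one_le L (j:ℕ)) (polygonal_nonneg L (x j))
          rw [one_mul] at h1
          omega
      have hsum_le : ∑ j : Fin (2*L+9), acoef L (j:ℕ) * polygonal ((L:ℤ)+4) (x j)
          ≤ ∑ j : Fin (2*L+9), gfun L (j:ℕ) :=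
        Finset.sum_le_sum (fun j _ => hterm j)
      have hGfin : ∑ j : Fin (2*L+9), gfun L (j:ℕ)
          = ∑ j ∈ Finset.range (2*L+9), gfun L j :=
        Fin.sum_univ_eq_sum_range (fun j => gfun L j) (2*L+9)
      have hG : ∑ j ∈ Finset.range (2*L+9), gfun L j = (L:ℤ) - 1 := by
        rw [Finset.range_eq_Ico,
          ← Finset.sum_Ico_consecutive (fun j => gfun L j) (show 0 ≤ 9 by omega)
            (show 9 ≤ 2*L+9 by omega),
          ← Finset.sum_Ico_consecutive (fun j => gfun L j) (show 9 ≤ L+8 by omega)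
            (show L+8 ≤ 2*L+9 by omega)]
        have hA : ∑ j ∈ Finset.Ico 0 9, gfun L j = 0 := by
          refine Finset.sum_eq_zero ?_
          intro j hj
          simp only [Finset.mem_Ico] at hj
          unfold gfun
          rw [if_neg (by omega)]
        have hB : ∑ j ∈ Finset.Ico 9 (L+8), gfun L j = (L:ℤ) - 1 := by
          have hc : ∀ j ∈ Finset.Ico 9 (L+8), gfun L j = 1 := by
            intro j hj
            simp only [Finset.mem_Ico] at hj
            unfold gfun
            rw [if_pos (by omega)]
          rw [Finset.sum_congr rfl hc, Finset.sum_const, Nat.card_Ico, nsmul_eq_mul, mul_one]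
          have : ((L + 8 - 9 : ℕ) : ℤ) = (L:ℤ) - 1 := by omega
          exact this
        have hC : ∑ j ∈ Finset.Ico (L+8) (2*L+9), gfun L j = 0 := by
          refine Finset.sum_eq_zero ?_
          intro j hj
          simp only [Finset.mem_Ico] at hj
          unfold gfun
          rw [if_neg (by omega)]
        rw [hA, hB, hC]
        ring
      rw [hx, hGfin, hG] at hsum_le
      omega
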